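/- Let p,q ≥ 2 be coprime integers, n ≥ 1 an integer, and let τ be the tau function of Σ(p,q,pqn-1). Then τ(M_0) = 1, τ(M_{i+1}) - τ(M_i) = ⌊(i+1)/n⌋ + 1 - g for all 0 ≤ i ≤ N-3, and consequently τ(M_i) = 1 + Σ_{m=1}^{i} (⌊m/n⌋ + 1 - g) for all 1 ≤ i ≤ N-2. -/

import Mathlib

/-- The numerical semigroup `S_{p,q} = {ap + bq : a,b ∈ ℤ_{≥0}}`, as a set of integers. -/
def Spq (p q : ℤ) : Set ℤ := {s | ∃ a b : ℤ, 0 ≤ a ∧ 0 ≤ b ∧ s = a * p + b * q}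

/-- `Δ_j = 1 - j·e₀ - Σᵢ ⌈j·bᵢ/aᵢ⌉` for the Seifert data
`(e₀, (p,p'), (q,q'), (pqn-1, pqn-n-1))` with `e₀ = -2` of `Σ(p,q,pqn-1)`. -/
noncomputable def brieskornDelta (p q n p' q' : ℤ) (j : ℤ) : ℤ :=
  1 + 2 * j - (⌈(j * p' : ℚ) / (p : ℚ)⌉ + ⌈(j * q' : ℚ) / (q : ℚ)⌉
    + ⌈(j * (p * q * n - n - 1) : ℚ) / (p * q * n - 1 : ℚ)⌉)

/-- The tau function `τ(k) = Σ_{j=0}^{k-1} Δ_j` of `Σ(p,q,pqn-1)`. -/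
noncomputable def brieskornTau (p q n p' q' : ℤ) (k : ℤ) : ℤ :=
  ∑ j ∈ Finset.range k.toNat, brieskornDelta p q n p' q' (j : ℤ)

/-- `α_i = #{s ∈ ℤ_{≥0} : s ∉ S_{p,q}, s > i}`. -/
noncomputable def gapAlpha (p q i : ℤ) : ℕ :=
  Set.ncard {s : ℤ | 0 ≤ s ∧ s ∉ Spq p q ∧ i < s}

/-!
Writing `r = pqn - 1`, one has `Δ_j = 1 + j - ⌈jp'/p⌉ - ⌈jq'/q⌉ + ⌊jn/r⌋`. On the block
`M_i ≤ j < M_{i+1}` of `pq` consecutive integers the residues of `jp'` mod `p` and of `jq'`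
mod `q` run through every residue class `q` resp. `p` times, and since `qp' + pq' = pq + 1` the linear
parts of the two ceilings almost cancel against `Σ j`; meanwhile `⌊jn/r⌋ = i` on the block except
on its last `⌊(i+1)/n⌋ + 1` entries, where it is `i + 1`. This gives the increment
`⌊(i+1)/n⌋ + 1 - g`, and the closed form for `τ(M_i)` follows by telescoping from `τ(1) = Δ_0 = 1`.
-/

open Finset

theorem ceil_intCast_div_intCast (a b : ℤ) (hb : 0 ≤ b) : ⌈(a / b : ℚ)⌉ = -(-a / b) := by
  lift b to ℕ using hb
  exact_mod_cast Rat.ceil_intCast_div_natCast a b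

theorem two_mul_sum_range_intCast (m : ℕ) : 2 * ∑ t ∈ range m, (t : ℤ) = m * (m - 1) := by
  induction m with
  | zero => simp
  | succ m ih => rw [sum_range_succ, mul_add, ih]; push_cast; ring

theorem sum_range_ite_le (K : ℤ) (hK : 0 ≤ K) (m : ℕ) :
    ∑ t ∈ range m, (if K ≤ t then 1 else 0 : ℤ) = max (m - K) 0 := by
  induction m with
  | zero => simp [hK]
  | succ m ih =>
    rw [sum_range_succ, ih]
    split_ifs <;> omega

theorem sum_range_add_mul_emod (m : ℕ) (a c : ℤ) (hc : IsCoprime c m) :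
    ∑ t ∈ range m, (a + t) * c % m = ∑ t ∈ range m, (t : ℤ) := by
  set r : ℕ → ℤ := fun t => (a + t) * c % m
  have hr : ∀ t ∈ range m, 0 ≤ r t ∧ r t < m := fun t ht => by
    have hm : (0 : ℤ) < m := by have := mem_range.mp ht; omega
    exact ⟨Int.emod_nonneg _ hm.ne', Int.emod_lt_of_pos _ hm⟩
  have hmaps : Set.MapsTo (fun t => (r t).toNat) (range m) (range m) :=
    fun t ht => mem_range.mpr (by have := hr t ht; dsimp only; omega)
  have hinj : Set.InjOn (fun t => (r t).toNat) (range m) := by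
    intro s hs t ht hst
    have hmod : (a + s) * c ≡ (a + t) * c [ZMOD m] := by
      have h1 := hr s hs; have h2 := hr t ht; simp only [r] at h1 h2 hst; unfold Int.ModEq; omega
    have hdvd : (m : ℤ) ∣ (t - s) * c := by
      convert hmod.dvd using 1; ring
    simp only [coe_range, Set.mem_Iio] at hs ht
    have := Int.eq_zero_of_abs_lt_dvd (hc.symm.dvd_of_dvd_mul_right hdvd) (by rw [abs_lt]; omega)
    omega
  refine sum_nbij _ hmaps hinj (surjOn_of_injOn_of_card_le _ hmaps hinj le_rfl) ?_
  intro t ht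
  exact (Int.toNat_of_nonneg (hr t ht).1).symm

theorem sum_range_mul_add_mul_emod (m k : ℕ) (a c : ℤ) (hc : IsCoprime c m) :
    ∑ t ∈ range (k * m), (a + t) * c % m = k * ∑ t ∈ range m, (t : ℤ) := by
  induction k with
  | zero => simp
  | succ k ih =>
    rw [add_one_mul, sum_range_add, ih, ← sum_range_add_mul_emod m (a + (k * m : ℕ)) c hc]
    push_cast
    simp only [add_assoc, add_mul, one_mul]

theorem sum_range_mul_add_mul_ediv (m k : ℕ) (a c : ℤ) (hc : IsCoprime c m) :
    m * ∑ t ∈ range (k * m), (a + t) * c / m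
      = c * ∑ t ∈ range (k * m), (a + t) - k * ∑ t ∈ range m, (t : ℤ) := by
  rw [← sum_range_mul_add_mul_emod m k a c hc, mul_sum, mul_sum, ← sum_sub_distrib]
  refine sum_congr rfl fun t _ => ?_
  rw [Int.emod_def]
  ring

theorem sum_range_mul_ediv_mul_sub_one (m : ℕ) (n i : ℤ) (hn : 0 < n) (hi : 0 ≤ i)
    (him : i + 2 < m * n) :
    ∑ t ∈ range m, (m * i + 1 + t) * n / (m * n - 1) = m * i + (i + 1) / n + 1 := by
  set r := (m : ℤ) * n - 1
  have hF0 : 0 ≤ (i + 1) / n := Int.ediv_nonneg (by omega) hn.le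
  have hF : (i + 1) / n < m := Int.ediv_lt_of_lt_mul hn (by linarith)
  have hterm : ∀ t ∈ range m, (m * i + 1 + t) * n / r
      = i + if (m - 1 - (i + 1) / n : ℤ) ≤ t then 1 else 0 := by
    intro t ht
    have htm : (t : ℤ) + 1 ≤ m := by have := mem_range.mp ht; omega
    have hx : (m * i + 1 + t) * n = (i + (t + 1) * n) + i * r := by ring
    have hlt : i + (t + 1) * n < 2 * r := by nlinarith
    have hcond : (m - 1 - (i + 1) / n ≤ (t : ℤ)) ↔ r ≤ i + (t + 1) * n := by
      rw [sub_le_comm, Int.le_ediv_iff_mul_le hn]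
      constructor <;> intro <;> linarith
    rw [Int.ediv_eq_iff_of_pos (by omega), hx]
    split_ifs with h
    · have := hcond.mp h; constructor <;> linarith
    · have := mt hcond.mpr h; constructor <;> nlinarith
  rw [sum_congr rfl hterm, sum_add_distrib, sum_const, card_range, nsmul_eq_mul,
    sum_range_ite_le _ (by omega)]
  omega

theorem mul_add_mul_eq_mul_add_one_of_modEq {p q p' q' : ℤ} (hpq : IsCoprime p q)
    (hp'0 : 0 < p') (hp'p : p' < p) (hq'0 : 0 < q') (hq'q : q' < q)
    (hp' : q * p' ≡ 1 [ZMOD p]) (hq' : p * q' ≡ 1 [ZMOD q]) :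
    q * p' + p * q' = p * q + 1 := by
  have hdvd : p * q ∣ q * p' + p * q' - 1 := by
    refine hpq.mul_dvd ?_ ?_
    · simpa [sub_add_eq_add_sub] using hp'.symm.dvd.add (dvd_mul_right p q')
    · simpa [add_sub_assoc] using (dvd_mul_right q p').add hq'.symm.dvd
  obtain ⟨c, hc⟩ := hdvd
  have hlo : 0 < p * q * c := by nlinarith
  have hhi : p * q * c < p * q * 2 := by nlinarith
  have hc1 : c = 1 := by
    have hpq0 : 0 < p * q := by nlinarith
    have := pos_of_mul_pos_right hlo hpq0.le
    have := lt_of_mul_lt_mul_left hhi hpq0.le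
    omega
  rw [hc1] at hc
  linarith

theorem brieskornDelta_eq (p q n p' q' j : ℤ) (hp : 0 ≤ p) (hq : 0 ≤ q)
    (hr : 0 < p * q * n - 1) :
    brieskornDelta p q n p' q' j
      = 1 + j + j * -p' / p + j * -q' / q + j * n / (p * q * n - 1) := by
  have h3 := ceil_intCast_div_intCast (j * (p * q * n - n - 1)) (p * q * n - 1) hr.le
  rw [show -(j * (p * q * n - n - 1)) = j * n + -j * (p * q * n - 1) by ring,
    Int.add_mul_ediv_right _ _ hr.ne'] at h3
  push_cast at h3
  rw [brieskornDelta, h3, ← Int.cast_mul, ← Int.cast_mul, ceil_intCast_div_intCast _ _ hp,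
    ceil_intCast_div_intCast _ _ hq]
  ring_nf

theorem brieskornTau_one (p q n p' q' : ℤ) : brieskornTau p q n p' q' 1 = 1 := by
  simp [brieskornTau, brieskornDelta]

theorem brieskornTau_add (p q n p' q' K : ℤ) (hK : 0 ≤ K) (L : ℕ) :
    brieskornTau p q n p' q' (K + L)
      = brieskornTau p q n p' q' K + ∑ t ∈ range L, brieskornDelta p q n p' q' (K + t) := by
  rw [brieskornTau, brieskornTau, show (K + L).toNat = K.toNat + L by omega, sum_range_add]
  push_cast [Int.toNat_of_nonneg hK]
  rfl

theorem sum_range_brieskornDelta (p q : ℕ) (n p' q' g i : ℤ)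
    (hinv : q * p' + p * q' = p * q + 1) (hg : 2 * g = (p - 1) * (q - 1))
    (hn : 0 < n) (hi : 0 ≤ i) (hin : i + 2 < p * q * n) :
    ∑ t ∈ range (p * q), brieskornDelta p q n p' q' (p * q * i + 1 + t)
      = (i + 1) / n + 1 - g := by
  have hr : 0 < (p : ℤ) * q * n - 1 := by omega
  have hpq : (p : ℤ) * q ≠ 0 := by rintro h; rw [h] at hin; omega
  have hP := sum_range_mul_add_mul_ediv p q (p * q * i + 1) (-p') ⟨-q, q' - q, by linarith⟩
  have hQ := sum_range_mul_add_mul_ediv q p (p * q * i + 1) (-q') ⟨-p, p' - p, by linarith⟩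
  have hN := sum_range_mul_ediv_mul_sub_one (p * q) n i hn hi (by push_cast; omega)
  have hS := two_mul_sum_range_intCast (p * q)
  have hSp := two_mul_sum_range_intCast p
  have hSq := two_mul_sum_range_intCast q
  rw [Nat.mul_comm q p] at hP
  push_cast at hN hS
  rw [sum_congr rfl fun t _ => brieskornDelta_eq p q n p' q' _ (by positivity) (by positivity) hr]
  simp only [sum_add_distrib, sum_const, card_range, nsmul_eq_mul, mul_add, Nat.cast_mul] at hP hQ ⊢
  apply mul_left_cancel₀ (mul_ne_zero two_ne_zero hpq)
  linear_combination 2 * q * hP + 2 * p * hQ + 2 * p * q * hN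
    - 2 * (∑ t ∈ range (p * q), (t : ℤ) + p * q * (p * q * i + 1)) * hinv
    - q ^ 2 * hSp - p ^ 2 * hSq - hS + p * q * hg

theorem brieskornTau_at_maxima_general (p q n p' q' : ℤ)
    (hpq : IsCoprime p q) (hn : 1 ≤ n)
    (hp'0 : 0 < p') (hp'p : p' < p) (hq'0 : 0 < q') (hq'q : q' < q)
    (hp' : q * p' ≡ 1 [ZMOD p]) (hq' : p * q' ≡ 1 [ZMOD q])
    (g : ℤ) (hg : 2 * g = (p - 1) * (q - 1)) :
    brieskornTau p q n p' q' 1 = 1 ∧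
    (∀ i : ℤ, 0 ≤ i → i ≤ n * (2 * g - 1) - 3 →
      brieskornTau p q n p' q' (p * q * (i + 1) + 1)
          - brieskornTau p q n p' q' (p * q * i + 1)
        = (i + 1) / n + 1 - g) ∧
    (∀ i : ℤ, 1 ≤ i → i ≤ n * (2 * g - 1) - 2 →
      brieskornTau p q n p' q' (p * q * i + 1)
        = 1 + ∑ m ∈ Finset.Icc 1 i.toNat, ((m : ℤ) / n + 1 - g)) := by
  lift p to ℕ using (hp'0.trans hp'p).le
  lift q to ℕ using (hq'0.trans hq'q).le
  have hinv := mul_add_mul_eq_mul_add_one_of_modEq hpq hp'0 hp'p hq'0 hq'q hp' hq'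
  have hstep : ∀ i : ℤ, 0 ≤ i → i ≤ n * (2 * g - 1) - 3 →
      brieskornTau p q n p' q' (p * q * (i + 1) + 1) - brieskornTau p q n p' q' (p * q * i + 1)
        = (i + 1) / n + 1 - g := by
    intro i hi0 hi1
    have hin : i + 2 < p * q * n := by
      nlinarith [mul_pos (by omega : (0 : ℤ) < n) (by omega : (0 : ℤ) < p + q)]
    rw [show (p : ℤ) * q * (i + 1) + 1 = p * q * i + 1 + (p * q : ℕ) by push_cast; ring,
      brieskornTau_add _ _ _ _ _ _ (by positivity), add_sub_cancel_left]
    exact sum_range_brieskornDelta p q n p' q' g i hinv hg (by omega) hi0 hin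
  refine ⟨brieskornTau_one .., hstep, fun i hi1 hi2 => ?_⟩
  lift i to ℕ using (by omega)
  rw [Int.toNat_natCast]
  clear hi1
  induction i with
  | zero => simpa using brieskornTau_one p q n p' q'
  | succ k ih =>
    have hk := hstep k (by omega) (by omega)
    rw [sum_Icc_succ_top (by omega), ← add_assoc, ← ih (by omega)]
    push_cast at hk ⊢
    linarith

/-- For the tau function `τ` of `Σ(p,q,pqn-1)` (coprime `p,q ≥ 2`, `n ≥ 1`), with
`g = (p-1)(q-1)/2`, `N = n(2g-1)` and `M_i = pqi + 1`: `τ(M_0) = 1`,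
`τ(M_{i+1}) - τ(M_i) = ⌊(i+1)/n⌋ + 1 - g` for `0 ≤ i ≤ N-3`, and consequently
`τ(M_i) = 1 + Σ_{m=1}^{i} (⌊m/n⌋ + 1 - g)` for `1 ≤ i ≤ N-2`. -/
theorem brieskornTau_at_maxima (p q n p' q' : ℤ) (hp : 2 ≤ p) (hq : 2 ≤ q)
    (hpq : IsCoprime p q) (hn : 1 ≤ n)
    (hp'0 : 0 < p') (hp'p : p' < p) (hq'0 : 0 < q') (hq'q : q' < q)
    (hp' : q * p' ≡ 1 [ZMOD p]) (hq' : p * q' ≡ 1 [ZMOD q])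
    (g : ℤ) (hg : 2 * g = (p - 1) * (q - 1)) :
    brieskornTau p q n p' q' 1 = 1 ∧
    (∀ i : ℤ, 0 ≤ i → i ≤ n * (2 * g - 1) - 3 →
      brieskornTau p q n p' q' (p * q * (i + 1) + 1)
          - brieskornTau p q n p' q' (p * q * i + 1)
        = (i + 1) / n + 1 - g) ∧
    (∀ i : ℤ, 1 ≤ i → i ≤ n * (2 * g - 1) - 2 →
      brieskornTau p q n p' q' (p * q * i + 1)
        = 1 + ∑ m ∈ Finset.Icc 1 i.toNat, ((m : ℤ) / n + 1 - g)) :=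
  brieskornTau_at_maxima_general p q n p' q' hpq hn hp'0 hp'p hq'0 hq'q hp' hq' g hg
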